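/- arXiv:2604.03884 — 3 statements merged into one kernel-verified Lean document; each statement's English description precedes it below -/
import Mathlib

section
/- Tsirelson's bound: Let H_A and H_B be finite-dimensional complex inner product spaces, let ψ ∈ H_A ⊗ H_B be a unit vector, and let A0, A1 be binary observables on H_A and B0, B1 binary observables on H_B. Then the CHSH bias satisfies Re⟨ψ, (A0⊗B0 + A0⊗B1 + A1⊗B0 − A1⊗B1) ψ⟩ ≤ 2√2. -/
set_option maxHeartbeats 1000000
set_option synthInstance.maxHeartbeats 400000
set_option synthInstance.maxSize 2048

noncomputable section

open scoped TensorProduct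
open Module

/-! ## The canonical inner product space structure on tensor products -/

section TensorInner

variable (E F : Type*) [NormedAddCommGroup E] [InnerProductSpace ℂ E] [FiniteDimensional ℂ E]
  [NormedAddCommGroup F] [InnerProductSpace ℂ F] [FiniteDimensional ℂ F]

/-- Coordinate representation of `E ⊗[ℂ] F` with respect to the tensor product of
orthonormal bases of `E` and `F`. -/
def tensorRepr : (E ⊗[ℂ] F) ≃ₗ[ℂ]
    EuclideanSpace ℂ (Fin (finrank ℂ E) × Fin (finrank ℂ F)) :=
  (((stdOrthonormalBasis ℂ E).toBasis.tensorProduct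
      (stdOrthonormalBasis ℂ F).toBasis).equivFun).trans
    (WithLp.linearEquiv 2 ℂ ((Fin (finrank ℂ E) × Fin (finrank ℂ F)) → ℂ)).symm

/-- The canonical inner product on the tensor product of two finite-dimensional complex
inner product spaces; it satisfies `⟪a ⊗ b, c ⊗ d⟫ = ⟪a, c⟫ * ⟪b, d⟫`. -/
def tensorCore : InnerProductSpace.Core ℂ (E ⊗[ℂ] F) where
  inner x y := inner ℂ (tensorRepr E F x) (tensorRepr E F y)
  conj_inner_symm x y := inner_conj_symm (𝕜 := ℂ) (tensorRepr E F x) (tensorRepr E F y)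
  re_inner_nonneg x := inner_self_nonneg (𝕜 := ℂ) (x := tensorRepr E F x)
  add_left x y z := by simp [map_add, inner_add_left]
  smul_left x y r := by simp [map_smul, inner_smul_left, mul_comm]
  definite x h := by
    have h0 : tensorRepr E F x = 0 := inner_self_eq_zero.mp h
    simpa using (LinearEquiv.map_eq_zero_iff _).mp h0

noncomputable instance tensorNormedAddCommGroup : NormedAddCommGroup (E ⊗[ℂ] F) :=
  (tensorCore E F).toNormedAddCommGroup

noncomputable instance tensorInnerProductSpace : InnerProductSpace ℂ (E ⊗[ℂ] F) :=
  InnerProductSpace.ofCore (tensorCore E F).toCore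

end TensorInner

notation "⟪" x ", " y "⟫" => (inner (𝕜 := ℂ) x y)

/-! ## Qubits, standard states and gates -/

/-- The qubit space `ℂ²`. -/
abbrev Qubit := EuclideanSpace ℂ (Fin 2)

/-- The standard basis state `|0⟩`. -/
def ket0 : Qubit := EuclideanSpace.single 0 1

/-- The standard basis state `|1⟩`. -/
def ket1 : Qubit := EuclideanSpace.single 1 1

/-- The rank-one operator `|a⟩⟨b|` on an inner product space. -/
def ketbra {H : Type*} [NormedAddCommGroup H] [InnerProductSpace ℂ H] (a b : H) :
    H →ₗ[ℂ] H where
  toFun v := (inner ℂ b v : ℂ) • a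
  map_add' u v := by simp [inner_add_right, add_smul]
  map_smul' c v := by simp [inner_smul_right, smul_smul]

/-- The projector `|0⟩⟨0|`. -/
def proj0 : Qubit →ₗ[ℂ] Qubit := ketbra ket0 ket0

/-- The projector `|1⟩⟨1|`. -/
def proj1 : Qubit →ₗ[ℂ] Qubit := ketbra ket1 ket1

/-- The Pauli operator `σ_z = |0⟩⟨0| - |1⟩⟨1|`. -/
def pauliZ : Qubit →ₗ[ℂ] Qubit := ketbra ket0 ket0 - ketbra ket1 ket1

/-- The Pauli operator `σ_x = |0⟩⟨1| + |1⟩⟨0|`. -/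
def pauliX : Qubit →ₗ[ℂ] Qubit := ketbra ket0 ket1 + ketbra ket1 ket0

/-- The Hadamard gate `H = (Z + X)/√2`. -/
def Hadamard : Qubit →ₗ[ℂ] Qubit := ((Real.sqrt 2 : ℂ))⁻¹ • (pauliZ + pauliX)

/-- The reflected Hadamard gate `H' = (Z - X)/√2`. -/
def HadamardPrime : Qubit →ₗ[ℂ] Qubit := ((Real.sqrt 2 : ℂ))⁻¹ • (pauliZ - pauliX)

/-- The rotation `R = sin(π/8)·X + cos(π/8)·Z`, satisfying `RZR† = H`, `RXR† = H'`. -/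
def Rotation : Qubit →ₗ[ℂ] Qubit :=
  (Real.sin (Real.pi / 8) : ℂ) • pauliX + (Real.cos (Real.pi / 8) : ℂ) • pauliZ

/-! ## Bell states -/

/-- The Bell state `|Φ+⟩ = (|00⟩ + |11⟩)/√2`. -/
def bellPhiPlus : Qubit ⊗[ℂ] Qubit :=
  ((Real.sqrt 2 : ℂ))⁻¹ • (ket0 ⊗ₜ[ℂ] ket0 + ket1 ⊗ₜ[ℂ] ket1)

/-- The Bell state `|Φ−⟩ = (|00⟩ − |11⟩)/√2`. -/
def bellPhiMinus : Qubit ⊗[ℂ] Qubit :=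
  ((Real.sqrt 2 : ℂ))⁻¹ • (ket0 ⊗ₜ[ℂ] ket0 - ket1 ⊗ₜ[ℂ] ket1)

/-- The Bell state `|Ψ+⟩ = (|01⟩ + |10⟩)/√2`. -/
def bellPsiPlus : Qubit ⊗[ℂ] Qubit :=
  ((Real.sqrt 2 : ℂ))⁻¹ • (ket0 ⊗ₜ[ℂ] ket1 + ket1 ⊗ₜ[ℂ] ket0)

/-- The Bell state `|Ψ−⟩ = (|01⟩ − |10⟩)/√2`. -/
def bellPsiMinus : Qubit ⊗[ℂ] Qubit :=
  ((Real.sqrt 2 : ℂ))⁻¹ • (ket0 ⊗ₜ[ℂ] ket1 - ket1 ⊗ₜ[ℂ] ket0)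

/-! ## Binary observables and CHSH strategies -/

/-- A binary observable: a symmetric (self-adjoint) involution. -/
structure IsBinaryObservable {H : Type*} [NormedAddCommGroup H] [InnerProductSpace ℂ H]
    (A : H →ₗ[ℂ] H) : Prop where
  symm : A.IsSymmetric
  sq_one : A ∘ₗ A = LinearMap.id

variable {H_A H_B : Type*}
  [NormedAddCommGroup H_A] [InnerProductSpace ℂ H_A] [FiniteDimensional ℂ H_A]
  [NormedAddCommGroup H_B] [InnerProductSpace ℂ H_B] [FiniteDimensional ℂ H_B]

/-- A CHSH strategy: a shared unit state together with two binary observables per party. -/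
structure CHSHStrategy (H_A H_B : Type*)
    [NormedAddCommGroup H_A] [InnerProductSpace ℂ H_A] [FiniteDimensional ℂ H_A]
    [NormedAddCommGroup H_B] [InnerProductSpace ℂ H_B] [FiniteDimensional ℂ H_B] where
  psi : H_A ⊗[ℂ] H_B
  psi_norm : ‖psi‖ = 1
  A0 : H_A →ₗ[ℂ] H_A
  A1 : H_A →ₗ[ℂ] H_A
  B0 : H_B →ₗ[ℂ] H_B
  B1 : H_B →ₗ[ℂ] H_B
  A0_bin : IsBinaryObservable A0
  A1_bin : IsBinaryObservable A1
  B0_bin : IsBinaryObservable B0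
  B1_bin : IsBinaryObservable B1

/-- The general CHSH operator `A0⊗B0 + A0⊗B1 + A1⊗B0 − A1⊗B1`. -/
def CHSH_op (A0 A1 : H_A →ₗ[ℂ] H_A) (B0 B1 : H_B →ₗ[ℂ] H_B) :
    H_A ⊗[ℂ] H_B →ₗ[ℂ] H_A ⊗[ℂ] H_B :=
  TensorProduct.map A0 B0 + TensorProduct.map A0 B1 +
    TensorProduct.map A1 B0 - TensorProduct.map A1 B1

/-- The CHSH bias `β(S) = Re⟨ψ, CHSH ψ⟩` of a strategy. -/
def chshBias (S : CHSHStrategy H_A H_B) : ℝ :=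
  (⟪S.psi, (CHSH_op S.A0 S.A1 S.B0 S.B1) S.psi⟫).re

/-- Alice's observable acting on the shared state. -/
def applyAlice (A : H_A →ₗ[ℂ] H_A) : H_A ⊗[ℂ] H_B →ₗ[ℂ] H_A ⊗[ℂ] H_B :=
  TensorProduct.map A LinearMap.id

/-- Bob's observable acting on the shared state. -/
def applyBob (B : H_B →ₗ[ℂ] H_B) : H_A ⊗[ℂ] H_B →ₗ[ℂ] H_A ⊗[ℂ] H_B :=
  TensorProduct.map LinearMap.id B

/-! ## The extraction circuit -/

variable {H : Type*} [NormedAddCommGroup H] [InnerProductSpace ℂ H] [FiniteDimensional ℂ H]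

/-- Ancilla embedding `v ↦ |aux⟩ ⊗ v`. -/
def embed (aux : Qubit) : H →ₗ[ℂ] (Qubit ⊗[ℂ] H) :=
  (TensorProduct.mk ℂ Qubit H) aux

/-- Controlled gate `|0⟩⟨0| ⊗ I + |1⟩⟨1| ⊗ A`. -/
def controlGate (A : H →ₗ[ℂ] H) : (Qubit ⊗[ℂ] H) →ₗ[ℂ] (Qubit ⊗[ℂ] H) :=
  TensorProduct.map proj0 (LinearMap.id : H →ₗ[ℂ] H) + TensorProduct.map proj1 A

/-- The extraction unitary `U_A = C_{A1}(H ⊗ I)C_{A0}(H ⊗ I)`. -/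
def unitaryUA (A0 A1 : H →ₗ[ℂ] H) : (Qubit ⊗[ℂ] H) →ₗ[ℂ] (Qubit ⊗[ℂ] H) :=
  (controlGate A1) ∘ₗ (TensorProduct.map Hadamard LinearMap.id) ∘ₗ
    (controlGate A0) ∘ₗ (TensorProduct.map Hadamard LinearMap.id)

/-- Alice's extractor `V_A = U_A (|0⟩ ⊗ ·)`. -/
def VA (A0 A1 : H →ₗ[ℂ] H) : H →ₗ[ℂ] (Qubit ⊗[ℂ] H) :=
  (unitaryUA A0 A1) ∘ₗ (embed ket0)

/-- Bob's rotated extraction unitary `U_B = (R ⊗ I) U_A(B0,B1) (R† ⊗ I)`. -/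
def unitaryUB (B0 B1 : H →ₗ[ℂ] H) : (Qubit ⊗[ℂ] H) →ₗ[ℂ] (Qubit ⊗[ℂ] H) :=
  (TensorProduct.map Rotation LinearMap.id) ∘ₗ (unitaryUA B0 B1) ∘ₗ
    (TensorProduct.map (LinearMap.adjoint Rotation) LinearMap.id)

/-- Bob's rotated ancilla `|aux⟩ = R|0⟩`. -/
def auxState : Qubit := Rotation ket0

/-- Bob's extractor `V_B = U_B (|aux⟩ ⊗ ·)`. -/
def VB (B0 B1 : H →ₗ[ℂ] H) : H →ₗ[ℂ] (Qubit ⊗[ℂ] H) :=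
  (unitaryUB B0 B1) ∘ₗ (embed auxState)

/-! ## Tensor regrouping -/

/-- The canonical regrouping isomorphism
`(ℂ² ⊗ H_A) ⊗ (ℂ² ⊗ H_B) ≃ (ℂ² ⊗ ℂ²) ⊗ (H_A ⊗ H_B)`. -/
def regSwap (H_A H_B : Type*)
    [NormedAddCommGroup H_A] [InnerProductSpace ℂ H_A] [FiniteDimensional ℂ H_A]
    [NormedAddCommGroup H_B] [InnerProductSpace ℂ H_B] [FiniteDimensional ℂ H_B] :
    ((Qubit ⊗[ℂ] H_A) ⊗[ℂ] (Qubit ⊗[ℂ] H_B)) ≃ₗ[ℂ]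
      ((Qubit ⊗[ℂ] Qubit) ⊗[ℂ] (H_A ⊗[ℂ] H_B)) :=
  (TensorProduct.assoc ℂ Qubit H_A (Qubit ⊗[ℂ] H_B)).trans <|
    (TensorProduct.congr (LinearEquiv.refl ℂ Qubit)
      (((TensorProduct.assoc ℂ H_A Qubit H_B).symm.trans
        (TensorProduct.congr (TensorProduct.comm ℂ H_A Qubit) (LinearEquiv.refl ℂ H_B))).trans
          (TensorProduct.assoc ℂ Qubit H_A H_B))).trans
      (TensorProduct.assoc ℂ Qubit Qubit (H_A ⊗[ℂ] H_B)).symm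

/-! ## The canonical two-qubit CHSH operator and the constants -/

/-- The canonical two-qubit CHSH operator `K = Z⊗H + Z⊗H' + X⊗H − X⊗H'`. -/
def K : (Qubit ⊗[ℂ] Qubit) →ₗ[ℂ] (Qubit ⊗[ℂ] Qubit) :=
  TensorProduct.map pauliZ Hadamard + TensorProduct.map pauliZ HadamardPrime +
    TensorProduct.map pauliX Hadamard - TensorProduct.map pauliX HadamardPrime

/-- The constant `c = 128√2` in the anticommutator bounds. -/
def cConst : ℝ := 128 * Real.sqrt 2

/-- The error function `δ(ε) = ε + 4√(cε)`. -/
def delta (ε : ℝ) : ℝ := ε + 4 * Real.sqrt (cConst * ε)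

end

open scoped TensorProduct
open Module

/-!
Put `P = A₀ + A₁ - √2 B₀` and `Q = A₀ - A₁ - √2 B₁`. Alice's and Bob's observables act on
different tensor factors and therefore commute, so `A_i² = B_j² = 1` gives the sum-of-squares
identity `P² + Q² = 8 - 2√2 T` for the CHSH operator `T`. As `P` and `Q` are self-adjoint,
`⟪ψ, (P² + Q²) ψ⟫ = ‖P ψ‖² + ‖Q ψ‖² ≥ 0`, hence `Re ⟪ψ, T ψ⟫ ≤ 8 / (2√2) = 2√2` for a unit `ψ`.
-/

theorem IsBinaryObservable.mul_self {H : Type*} [NormedAddCommGroup H] [InnerProductSpace ℂ H]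
    {A : H →ₗ[ℂ] H} (hA : IsBinaryObservable A) : A * A = 1 :=
  hA.sq_one

theorem chsh_sum_sq {𝕜 R : Type*} [CommRing 𝕜] [Ring R] [Algebra 𝕜 R] {a₀ a₁ b₀ b₁ : R}
    (ha₀ : a₀ * a₀ = 1) (ha₁ : a₁ * a₁ = 1) (hb₀ : b₀ * b₀ = 1) (hb₁ : b₁ * b₁ = 1)
    (h₀₀ : Commute a₀ b₀) (h₀₁ : Commute a₀ b₁) (h₁₀ : Commute a₁ b₀) (h₁₁ : Commute a₁ b₁)
    {c : 𝕜} (hc : c * c = 2) :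
    (a₀ + a₁ - c • b₀) * (a₀ + a₁ - c • b₀) + (a₀ - a₁ - c • b₁) * (a₀ - a₁ - c • b₁) =
      (8 : 𝕜) • 1 - (2 * c) • (a₀ * b₀ + a₀ * b₁ + a₁ * b₀ - a₁ * b₁) := by
  simp only [mul_add, add_mul, mul_sub, sub_mul, smul_mul_assoc, mul_smul_comm,
    ha₀, ha₁, hb₀, hb₁, h₀₀.eq, h₀₁.eq, h₁₀.eq, h₁₁.eq]
  match_scalars
  · linear_combination 2 * hc
  all_goals ring

section CHSH

variable {E : Type*} [NormedAddCommGroup E] [InnerProductSpace ℂ E]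

theorem LinearMap.IsSymmetric.re_inner_mul_self_apply_nonneg {P : E →ₗ[ℂ] E}
    (hP : P.IsSymmetric) (x : E) : 0 ≤ (⟪x, (P * P) x⟫).re := by
  rw [Module.End.mul_apply, ← hP]
  exact inner_self_nonneg (𝕜 := ℂ)

theorem re_inner_chsh_le {a₀ a₁ b₀ b₁ : E →ₗ[ℂ] E}
    (ha₀ : IsBinaryObservable a₀) (ha₁ : IsBinaryObservable a₁)
    (hb₀ : IsBinaryObservable b₀) (hb₁ : IsBinaryObservable b₁)
    (h₀₀ : Commute a₀ b₀) (h₀₁ : Commute a₀ b₁) (h₁₀ : Commute a₁ b₀) (h₁₁ : Commute a₁ b₁)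
    (x : E) :
    (⟪x, (a₀ * b₀ + a₀ * b₁ + a₁ * b₀ - a₁ * b₁) x⟫).re ≤ 2 * Real.sqrt 2 * ‖x‖ ^ 2 := by
  set c : ℂ := ((Real.sqrt 2 : ℝ) : ℂ)
  have hc : c * c = 2 := by
    rw [← Complex.ofReal_mul, Real.mul_self_sqrt zero_le_two, Complex.ofReal_ofNat]
  have hc_conj : starRingEnd ℂ c = c := Complex.conj_ofReal _
  have hP : (a₀ + a₁ - c • b₀).IsSymmetric := (ha₀.symm.add ha₁.symm).sub (hb₀.symm.smul hc_conj)
  have hQ : (a₀ - a₁ - c • b₁).IsSymmetric := (ha₀.symm.sub ha₁.symm).sub (hb₁.symm.smul hc_conj)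
  have hsos :=
    add_nonneg (hP.re_inner_mul_self_apply_nonneg x) (hQ.re_inner_mul_self_apply_nonneg x)
  rw [← Complex.add_re, ← inner_add_right, ← LinearMap.add_apply,
    chsh_sum_sq ha₀.mul_self ha₁.mul_self hb₀.mul_self hb₁.mul_self h₀₀ h₀₁ h₁₀ h₁₁ hc] at hsos
  have h2c : 2 * c = ((2 * Real.sqrt 2 : ℝ) : ℂ) := by push_cast; rfl
  rw [LinearMap.sub_apply, LinearMap.smul_apply, LinearMap.smul_apply, Module.End.one_apply,
    inner_sub_right, inner_smul_right, inner_smul_right, h2c, ← Complex.ofReal_ofNat,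
    Complex.sub_re, Complex.re_ofReal_mul, Complex.re_ofReal_mul] at hsos
  have hx : (⟪x, x⟫).re = ‖x‖ ^ 2 := inner_self_eq_norm_sq (𝕜 := ℂ) x
  have hsqrt : Real.sqrt 2 * Real.sqrt 2 = 2 := Real.mul_self_sqrt zero_le_two
  have hpos : 0 < Real.sqrt 2 := by positivity
  nlinarith

end CHSH

theorem LinearMap.commute_rTensor_lTensor {R M N : Type*} [CommSemiring R] [AddCommMonoid M]
    [Module R M] [AddCommMonoid N] [Module R N] (f : M →ₗ[R] M) (g : N →ₗ[R] N) :
    Commute (f.rTensor N) (g.lTensor M) :=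
  (rTensor_comp_lTensor (f := f) (g := g)).trans (lTensor_comp_rTensor (f := f) (g := g)).symm

theorem CHSH_op_eq {E F : Type*} [NormedAddCommGroup E] [InnerProductSpace ℂ E]
    [NormedAddCommGroup F] [InnerProductSpace ℂ F] (A0 A1 : E →ₗ[ℂ] E) (B0 B1 : F →ₗ[ℂ] F) :
    CHSH_op A0 A1 B0 B1 = A0.rTensor F * B0.lTensor E + A0.rTensor F * B1.lTensor E +
      A1.rTensor F * B0.lTensor E - A1.rTensor F * B1.lTensor E := by
  simp only [CHSH_op, Module.End.mul_eq_comp, LinearMap.rTensor_comp_lTensor]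

section TensorProduct

-- Otherwise the local instances would shadow Mathlib's `TensorProduct.instInnerProductSpace`,
-- for which the adjoint lemmas used below are stated.
attribute [-instance] tensorInnerProductSpace tensorNormedAddCommGroup

variable {E F : Type*} [NormedAddCommGroup E] [InnerProductSpace ℂ E] [FiniteDimensional ℂ E]
  [NormedAddCommGroup F] [InnerProductSpace ℂ F] [FiniteDimensional ℂ F]

theorem inner_tensorRepr (x y : E ⊗[ℂ] F) :
    inner ℂ (tensorRepr E F x) (tensorRepr E F y) = ⟪x, y⟫ :=
  ((stdOrthonormalBasis ℂ E).tensorProduct (stdOrthonormalBasis ℂ F)).repr.inner_map_map x y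

theorem LinearMap.IsSymmetric.rTensor {A : E →ₗ[ℂ] E} (hA : A.IsSymmetric) :
    (A.rTensor F).IsSymmetric :=
  (LinearMap.eq_adjoint_iff _ _).mp (by rw [LinearMap.adjoint_rTensor, hA.adjoint_eq])

theorem LinearMap.IsSymmetric.lTensor {B : F →ₗ[ℂ] F} (hB : B.IsSymmetric) :
    (B.lTensor E).IsSymmetric :=
  (LinearMap.eq_adjoint_iff _ _).mp (by rw [LinearMap.adjoint_lTensor, hB.adjoint_eq])

theorem IsBinaryObservable.rTensor {A : E →ₗ[ℂ] E} (hA : IsBinaryObservable A) :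
    IsBinaryObservable (A.rTensor F) :=
  ⟨hA.symm.rTensor, by rw [← LinearMap.rTensor_comp, hA.sq_one, LinearMap.rTensor_id]⟩

theorem IsBinaryObservable.lTensor {B : F →ₗ[ℂ] F} (hB : IsBinaryObservable B) :
    IsBinaryObservable (B.lTensor E) :=
  ⟨hB.symm.lTensor, by rw [← LinearMap.lTensor_comp, hB.sq_one, LinearMap.lTensor_id]⟩

theorem re_inner_CHSH_op_le (ψ : E ⊗[ℂ] F) {A0 A1 : E →ₗ[ℂ] E} {B0 B1 : F →ₗ[ℂ] F}
    (hA0 : IsBinaryObservable A0) (hA1 : IsBinaryObservable A1)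
    (hB0 : IsBinaryObservable B0) (hB1 : IsBinaryObservable B1) :
    (⟪ψ, CHSH_op A0 A1 B0 B1 ψ⟫).re ≤ 2 * Real.sqrt 2 * (⟪ψ, ψ⟫).re := by
  rw [CHSH_op_eq, show (⟪ψ, ψ⟫).re = ‖ψ‖ ^ 2 from inner_self_eq_norm_sq (𝕜 := ℂ) ψ]
  exact re_inner_chsh_le hA0.rTensor hA1.rTensor hB0.lTensor hB1.lTensor
    (LinearMap.commute_rTensor_lTensor _ _) (LinearMap.commute_rTensor_lTensor _ _)
    (LinearMap.commute_rTensor_lTensor _ _) (LinearMap.commute_rTensor_lTensor _ _) ψ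

end TensorProduct

/-- In the statement of `tsirelson_bound`, `⟪ψ, ψ⟫` is Mathlib's inner product on the tensor
product while `‖ψ‖` is the norm of `tensorNormedAddCommGroup`; they are compatible because
`tensorRepr` is the coordinate map of an orthonormal basis. -/
theorem re_inner_self_eq_norm_sq_tensor {E F : Type*} [NormedAddCommGroup E]
    [InnerProductSpace ℂ E] [FiniteDimensional ℂ E] [NormedAddCommGroup F]
    [InnerProductSpace ℂ F] [FiniteDimensional ℂ F] (x : E ⊗[ℂ] F) :
    (⟪x, x⟫).re = ‖x‖ ^ 2 := by
  rw [← inner_tensorRepr]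
  exact (norm_sq_eq_re_inner (𝕜 := ℂ) x).symm

/-- **Tsirelson's bound.** -/
theorem tsirelson_bound
    {H_A H_B : Type*}
    [NormedAddCommGroup H_A] [InnerProductSpace ℂ H_A] [FiniteDimensional ℂ H_A]
    [NormedAddCommGroup H_B] [InnerProductSpace ℂ H_B] [FiniteDimensional ℂ H_B]
    (ψ : H_A ⊗[ℂ] H_B) (hψ : ‖ψ‖ = 1)
    (A0 A1 : H_A →ₗ[ℂ] H_A) (B0 B1 : H_B →ₗ[ℂ] H_B)
    (hA0 : IsBinaryObservable A0) (hA1 : IsBinaryObservable A1)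
    (hB0 : IsBinaryObservable B0) (hB1 : IsBinaryObservable B1) :
    (⟪ψ, (CHSH_op A0 A1 B0 B1) ψ⟫).re ≤ 2 * Real.sqrt 2 := by
  calc (⟪ψ, CHSH_op A0 A1 B0 B1 ψ⟫).re ≤ 2 * Real.sqrt 2 * (⟪ψ, ψ⟫).re :=
        re_inner_CHSH_op_le ψ hA0 hA1 hB0 hB1
    _ = 2 * Real.sqrt 2 := by rw [re_inner_self_eq_norm_sq_tensor, hψ, one_pow, mul_one]
end

section
/- Sum-of-squares identity for CHSH: Let A0, A1 be binary observables on H_A and B0, B1 binary observables on H_B (finite-dimensional complex inner product spaces), and let CHSH := A0⊗B0 + A0⊗B1 + A1⊗B0 − A1⊗B1. Define P := ((A0+A1)/√2) ⊗ I − I ⊗ B0 and Q := ((A1−A0)/√2) ⊗ I + I ⊗ B1, as linear maps on H_A ⊗ H_B. Then 2√2 · I − CHSH = (1/√2)(P† P + Q† Q), where P† denotes the adjoint of P; in particular 2√2 · I − CHSH is a positive operator. -/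
set_option maxHeartbeats 1000000
set_option synthInstance.maxHeartbeats 400000
set_option synthInstance.maxSize 2048

open scoped TensorProduct ComplexOrder
open Module

/-! In the ring `End (H_A ⊗ H_B)` the operators `Aᵢ ⊗ I` and `I ⊗ Bⱼ` are involutions and every
`Aᵢ ⊗ I` commutes with every `I ⊗ Bⱼ`; these relations together with `√2 * √2 = 2` already force
the identity, read with `P² + Q²` in place of `P†P + Q†Q` (`P` and `Q` are self-adjoint).
Positivity then comes from `⟪v, P†P v⟫ = ‖P v‖²`. -/

theorem chsh_sos_of_commute {K R : Type*} [Field K] [Ring R] [Algebra K R] {c : K}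
    (hc : c * c = 2) (hc0 : c ≠ 0) {x y u v : R}
    (hx : x * x = 1) (hy : y * y = 1) (hu : u * u = 1) (hv : v * v = 1)
    (hxu : Commute x u) (hxv : Commute x v) (hyu : Commute y u) (hyv : Commute y v) :
    (2 * c) • (1 : R) - (x * u + x * v + y * u - y * v) =
      c⁻¹ • ((c⁻¹ • (x + y) - u) * (c⁻¹ • (x + y) - u) +
        (c⁻¹ • (y - x) + v) * (c⁻¹ • (y - x) + v)) := by
  simp only [mul_add, add_mul, mul_sub, sub_mul, smul_mul_assoc, mul_smul_comm, hx, hy, hu, hv,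
    ← hxu.eq, ← hxv.eq, ← hyu.eq, ← hyv.eq]
  match_scalars <;> field_simp <;> grind

namespace LinearMap

variable {R M N : Type*} [CommSemiring R] [AddCommMonoid M] [Module R M]
  [AddCommMonoid N] [Module R N]

theorem rTensor_mul_self_eq_one {f : End R M} (hf : f * f = 1) :
    f.rTensor N * f.rTensor N = 1 := by
  rw [← rTensor_mul, hf, End.one_eq_id, rTensor_id, End.one_eq_id]

theorem lTensor_mul_self_eq_one {g : End R N} (hg : g * g = 1) :
    g.lTensor M * g.lTensor M = 1 := by
  rw [← lTensor_mul, hg, End.one_eq_id, lTensor_id, End.one_eq_id]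

theorem commute_rTensor_lTensor_s1 (f : End R M) (g : End R N) :
    Commute (f.rTensor N) (g.lTensor M) :=
  (rTensor_comp_lTensor ..).trans (lTensor_comp_rTensor ..).symm

end LinearMap

section TensorInner

variable {E F : Type*} [NormedAddCommGroup E] [InnerProductSpace ℂ E] [FiniteDimensional ℂ E]
  [NormedAddCommGroup F] [InnerProductSpace ℂ F] [FiniteDimensional ℂ F]

/- `E ⊗[ℂ] F` carries two inner products: `⟪·, ·⟫` elaborates to Mathlib's
`TensorProduct.instInner`, while `adjoint`, `IsSymmetric` and `IsPositive` pick up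
`tensorInnerProductSpace`. They agree since `tensorRepr` is the coordinate map of the tensor
product of two orthonormal bases. -/
section

attribute [local instance high] TensorProduct.instNormedAddCommGroup
  TensorProduct.instInnerProductSpace

theorem tensorRepr_eq_tensorProduct_repr (x : E ⊗[ℂ] F) :
    tensorRepr E F x =
      ((stdOrthonormalBasis ℂ E).tensorProduct (stdOrthonormalBasis ℂ F)).repr x := by
  simp [tensorRepr, OrthonormalBasis.tensorProduct]

theorem inner_tensorInnerProductSpace (x y : E ⊗[ℂ] F) :
    @inner ℂ _ (tensorInnerProductSpace E F).toInner x y = ⟪x, y⟫ := by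
  change inner ℂ (tensorRepr E F x) (tensorRepr E F y) = _
  rw [tensorRepr_eq_tensorProduct_repr, tensorRepr_eq_tensorProduct_repr]
  exact LinearIsometryEquiv.inner_map_map _ x y

end

theorem LinearMap.IsSymmetric.tensorProduct_map {A : E →ₗ[ℂ] E} {B : F →ₗ[ℂ] F}
    (hA : A.IsSymmetric) (hB : B.IsSymmetric) : (TensorProduct.map A B).IsSymmetric := by
  intro x y
  induction x using TensorProduct.induction_on with
  | zero => simp
  | add x₁ x₂ h₁ h₂ => simp only [map_add, inner_add_left, h₁, h₂]
  | tmul a b =>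
    induction y using TensorProduct.induction_on with
    | zero => simp
    | add y₁ y₂ h₁ h₂ => simp only [map_add, inner_add_right, h₁, h₂]
    | tmul c d => simp [inner_tensorInnerProductSpace, hA a c, hB b d]

theorem LinearMap.IsPositive.re_inner_nonneg_tensor {T : E ⊗[ℂ] F →ₗ[ℂ] E ⊗[ℂ] F}
    (hT : T.IsPositive) (v : E ⊗[ℂ] F) : 0 ≤ (⟪v, T v⟫).re := by
  simpa only [inner_tensorInnerProductSpace, RCLike.re_to_complex] using
    hT.re_inner_nonneg_right v

end TensorInner

section CHSH

variable {H_A H_B : Type*} [NormedAddCommGroup H_A] [InnerProductSpace ℂ H_A]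
  [NormedAddCommGroup H_B] [InnerProductSpace ℂ H_B]
  (A0 A1 : H_A →ₗ[ℂ] H_A) (B0 B1 : H_B →ₗ[ℂ] H_B)

noncomputable def chshP : H_A ⊗[ℂ] H_B →ₗ[ℂ] H_A ⊗[ℂ] H_B :=
  ((Real.sqrt 2 : ℂ)⁻¹ • (A0 + A1)).rTensor H_B - B0.lTensor H_A

noncomputable def chshQ : H_A ⊗[ℂ] H_B →ₗ[ℂ] H_A ⊗[ℂ] H_B :=
  ((Real.sqrt 2 : ℂ)⁻¹ • (A1 - A0)).rTensor H_B + B1.lTensor H_A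

theorem CHSH_op_eq_mul :
    CHSH_op A0 A1 B0 B1 =
      A0.rTensor H_B * B0.lTensor H_A + A0.rTensor H_B * B1.lTensor H_A +
        A1.rTensor H_B * B0.lTensor H_A - A1.rTensor H_B * B1.lTensor H_A := by
  simp only [CHSH_op, Module.End.mul_eq_comp, LinearMap.rTensor_comp_lTensor]

variable {A0 A1 B0 B1} [FiniteDimensional ℂ H_A] [FiniteDimensional ℂ H_B]

theorem isSymmetric_chshP (hA0 : A0.IsSymmetric) (hA1 : A1.IsSymmetric) (hB0 : B0.IsSymmetric) :
    (chshP A0 A1 B0).IsSymmetric :=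
  (((hA0.add hA1).smul (by simp)).tensorProduct_map .id).sub (.tensorProduct_map .id hB0)

theorem isSymmetric_chshQ (hA0 : A0.IsSymmetric) (hA1 : A1.IsSymmetric) (hB1 : B1.IsSymmetric) :
    (chshQ A0 A1 B1).IsSymmetric :=
  (((hA1.sub hA0).smul (by simp)).tensorProduct_map .id).add (.tensorProduct_map .id hB1)

theorem two_sqrt_two_smul_id_sub_CHSH_op_eq
    (hA0 : IsBinaryObservable A0) (hA1 : IsBinaryObservable A1)
    (hB0 : IsBinaryObservable B0) (hB1 : IsBinaryObservable B1) :
    ((2 * Real.sqrt 2 : ℝ) : ℂ) • LinearMap.id - CHSH_op A0 A1 B0 B1 =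
      (Real.sqrt 2 : ℂ)⁻¹ • (LinearMap.adjoint (chshP A0 A1 B0) ∘ₗ chshP A0 A1 B0 +
        LinearMap.adjoint (chshQ A0 A1 B1) ∘ₗ chshQ A0 A1 B1) := by
  have hc : (Real.sqrt 2 : ℂ) * Real.sqrt 2 = 2 := by
    exact_mod_cast Real.mul_self_sqrt zero_le_two
  have hc0 : (Real.sqrt 2 : ℂ) ≠ 0 := by exact_mod_cast (Real.sqrt_pos.2 two_pos).ne'
  rw [(isSymmetric_chshP hA0.symm hA1.symm hB0.symm).adjoint_eq,
    (isSymmetric_chshQ hA0.symm hA1.symm hB1.symm).adjoint_eq, CHSH_op_eq_mul]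
  simp only [chshP, chshQ, LinearMap.rTensor_smul, LinearMap.rTensor_add,
    LinearMap.rTensor_sub, ← Module.End.mul_eq_comp, ← Module.End.one_eq_id]
  push_cast
  exact chsh_sos_of_commute hc hc0
    (LinearMap.rTensor_mul_self_eq_one hA0.sq_one) (LinearMap.rTensor_mul_self_eq_one hA1.sq_one)
    (LinearMap.lTensor_mul_self_eq_one hB0.sq_one) (LinearMap.lTensor_mul_self_eq_one hB1.sq_one)
    (LinearMap.commute_rTensor_lTensor_s1 ..) (LinearMap.commute_rTensor_lTensor_s1 ..)
    (LinearMap.commute_rTensor_lTensor_s1 ..) (LinearMap.commute_rTensor_lTensor_s1 ..)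

end CHSH

/-- **Sum-of-squares identity for CHSH.** -/
theorem chsh_sos_identity
    {H_A H_B : Type*}
    [NormedAddCommGroup H_A] [InnerProductSpace ℂ H_A] [FiniteDimensional ℂ H_A]
    [NormedAddCommGroup H_B] [InnerProductSpace ℂ H_B] [FiniteDimensional ℂ H_B]
    (A0 A1 : H_A →ₗ[ℂ] H_A) (B0 B1 : H_B →ₗ[ℂ] H_B)
    (hA0 : IsBinaryObservable A0) (hA1 : IsBinaryObservable A1)
    (hB0 : IsBinaryObservable B0) (hB1 : IsBinaryObservable B1) :
    letI CHSH := CHSH_op A0 A1 B0 B1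
    letI P := TensorProduct.map (((Real.sqrt 2 : ℂ))⁻¹ • (A0 + A1))
        (LinearMap.id : H_B →ₗ[ℂ] H_B)
      - TensorProduct.map (LinearMap.id : H_A →ₗ[ℂ] H_A) B0
    letI Q := TensorProduct.map (((Real.sqrt 2 : ℂ))⁻¹ • (A1 - A0))
        (LinearMap.id : H_B →ₗ[ℂ] H_B)
      + TensorProduct.map (LinearMap.id : H_A →ₗ[ℂ] H_A) B1
    (((2 * Real.sqrt 2 : ℝ) : ℂ) •
        (LinearMap.id : H_A ⊗[ℂ] H_B →ₗ[ℂ] H_A ⊗[ℂ] H_B) - CHSH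
      = ((Real.sqrt 2 : ℂ))⁻¹ •
          (LinearMap.adjoint P ∘ₗ P + LinearMap.adjoint Q ∘ₗ Q))
    ∧ ∀ v : H_A ⊗[ℂ] H_B,
        0 ≤ (⟪v, ((((2 * Real.sqrt 2 : ℝ) : ℂ) •
          (LinearMap.id : H_A ⊗[ℂ] H_B →ₗ[ℂ] H_A ⊗[ℂ] H_B) - CHSH)) v⟫).re := by
  have hsos := two_sqrt_two_smul_id_sub_CHSH_op_eq hA0 hA1 hB0 hB1
  have hpos := ((LinearMap.isPositive_adjoint_comp_self (chshP A0 A1 B0)).add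
    (LinearMap.isPositive_adjoint_comp_self (chshQ A0 A1 B1))).smul_of_nonneg
      (c := (Real.sqrt 2 : ℂ)⁻¹) (by positivity)
  exact ⟨hsos, fun v => hsos ▸ hpos.re_inner_nonneg_tensor v⟩
end

section
/- Exact intertwining for A0: Let H_A be a finite-dimensional complex inner product space and let A0, A1 be binary observables on H_A. With V_A : H_A → ℂ² ⊗ H_A the Alice extractor defined by V_A(v) := U_A(|0⟩ ⊗ v) where U_A := control(A1) ∘ (Had ⊗ I) ∘ control(A0) ∘ (Had ⊗ I), one has the exact operator identity (Z ⊗ I) ∘ V_A = V_A ∘ A0. -/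
set_option maxHeartbeats 1000000
set_option synthInstance.maxHeartbeats 400000
set_option synthInstance.maxSize 2048

open scoped TensorProduct
open Module

/-! Running the circuit on `|0⟩ ⊗ v` gives `V_A v = |0⟩ ⊗ P₊ v + |1⟩ ⊗ A1 P₋ v` with
`P± = (1 ± A0)/2`: the first Hadamard and `control(A0)` split `v` along the eigenspaces of `A0`,
the second Hadamard routes them to `|0⟩` and `|1⟩`. Since `A0² = 1`, `P± A0 = ±P±`, so
precomposing with `A0` flips the sign of the `|1⟩` branch, which is exactly what `Z ⊗ I` does. -/

lemma ketbra_apply {H : Type*} [NormedAddCommGroup H] [InnerProductSpace ℂ H] (a b v : H) :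
    ketbra a b v = ⟪b, v⟫ • a := rfl

@[simp] lemma norm_ket0 : ‖ket0‖ = 1 := by simp [ket0]

@[simp] lemma norm_ket1 : ‖ket1‖ = 1 := by simp [ket1]

@[simp] lemma inner_ket0_ket1 : ⟪ket0, ket1⟫ = 0 := by
  simp [ket0, ket1, EuclideanSpace.inner_single_left]

@[simp] lemma inner_ket1_ket0 : ⟪ket1, ket0⟫ = 0 := by
  simp [ket0, ket1, EuclideanSpace.inner_single_left]

lemma pauliZ_ket0 : pauliZ ket0 = ket0 := by simp [pauliZ, ketbra_apply]

lemma pauliZ_ket1 : pauliZ ket1 = -ket1 := by simp [pauliZ, ketbra_apply]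

lemma hadamard_ket0 : Hadamard ket0 = (Real.sqrt 2 : ℂ)⁻¹ • (ket0 + ket1) := by
  simp [Hadamard, pauliZ, pauliX, ketbra_apply]

lemma hadamard_ket1 : Hadamard ket1 = (Real.sqrt 2 : ℂ)⁻¹ • (ket0 - ket1) := by
  simp [Hadamard, pauliZ, pauliX, ketbra_apply, sub_eq_add_neg, add_comm]

section Extractor

variable {H : Type*} [NormedAddCommGroup H] [InnerProductSpace ℂ H]

lemma controlGate_ket0_tmul (A : H →ₗ[ℂ] H) (v : H) :
    controlGate A (ket0 ⊗ₜ v) = ket0 ⊗ₜ v := by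
  simp [controlGate, proj0, proj1, ketbra_apply]

lemma controlGate_ket1_tmul (A : H →ₗ[ℂ] H) (v : H) :
    controlGate A (ket1 ⊗ₜ v) = ket1 ⊗ₜ A v := by
  simp [controlGate, proj0, proj1, ketbra_apply]

lemma VA_apply (A0 A1 : H →ₗ[ℂ] H) (v : H) :
    VA A0 A1 v = ket0 ⊗ₜ ((2 : ℂ)⁻¹ • (v + A0 v)) + ket1 ⊗ₜ A1 ((2 : ℂ)⁻¹ • (v - A0 v)) := by
  have hsqrt : (Real.sqrt 2 : ℂ)⁻¹ * (Real.sqrt 2 : ℂ)⁻¹ = 2⁻¹ := by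
    rw [← mul_inv, ← Complex.ofReal_mul, Real.mul_self_sqrt zero_le_two]
    norm_num
  simp only [VA, unitaryUA, embed, LinearMap.comp_apply, TensorProduct.mk_apply,
    TensorProduct.map_tmul, LinearMap.id_apply, hadamard_ket0, hadamard_ket1,
    TensorProduct.smul_tmul, TensorProduct.add_tmul, TensorProduct.sub_tmul, map_add, map_smul,
    map_sub, controlGate_ket0_tmul, controlGate_ket1_tmul, smul_smul, hsqrt, smul_add, smul_sub,
    TensorProduct.tmul_add, TensorProduct.tmul_sub]
  abel

end Extractor

theorem A0_exact_intertwine_general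
    {H_A : Type*} [NormedAddCommGroup H_A] [InnerProductSpace ℂ H_A]
    (A0 A1 : H_A →ₗ[ℂ] H_A)
    (hA0 : IsBinaryObservable A0) :
    (TensorProduct.map pauliZ (LinearMap.id : H_A →ₗ[ℂ] H_A)) ∘ₗ VA A0 A1
      = VA A0 A1 ∘ₗ A0 := by
  ext v
  have hA0v : A0 (A0 v) = v := LinearMap.congr_fun hA0.sq_one v
  simp only [LinearMap.comp_apply, VA_apply, map_add, TensorProduct.map_tmul, pauliZ_ket0,
    pauliZ_ket1, LinearMap.id_apply, hA0v, TensorProduct.neg_tmul]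
  rw [← TensorProduct.tmul_neg, ← map_neg, ← smul_neg, neg_sub, add_comm v]

/-- **Exact intertwining for `A0`:** `(Z ⊗ I) ∘ V_A = V_A ∘ A0`. -/
theorem A0_exact_intertwine
    {H_A : Type*} [NormedAddCommGroup H_A] [InnerProductSpace ℂ H_A]
    [FiniteDimensional ℂ H_A]
    (A0 A1 : H_A →ₗ[ℂ] H_A)
    (hA0 : IsBinaryObservable A0) (hA1 : IsBinaryObservable A1) :
    (TensorProduct.map pauliZ (LinearMap.id : H_A →ₗ[ℂ] H_A)) ∘ₗ VA A0 A1
      = VA A0 A1 ∘ₗ A0 :=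
  A0_exact_intertwine_general A0 A1 hA0
end
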